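/- Let T be a tree, r a vertex of T, and let C be an (r,R)-cover of T with |C| = 2k−1. Let π be the profile of length 2k consisting of all end-vertices of the paths in C (namely r together with the 2k−1 other end-vertices). Then there exists a pairing P of π such that the collection { σ(x,y) : {x,y} ∈ P } of k paths (the unique path of T between each pair) is an R-cover of T. -/

import Mathlib

/-! Take a pairing of the profile of maximal total length `Σ d(x, y)`; it exists because that
total is at most `Σ_{x ∈ π} d(r, x)`. Suppose a vertex `u` is far from all of its paths, and let
`w` be a vertex of a path `σ(r, x)` of the cover within distance `R` of `u`; then `w` lies on no
path of the pairing. If `r` is paired with `a` and `x` with `b`, then in a tree `w` must lie on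
`σ(a, b)`, and re-pairing as `{r, x}, {a, b}` strictly increases the total length. -/

open SimpleGraph

/-- The Gromov product `(x|y)_z = ½(d(x,z) + d(z,y) − d(x,y))` in a graph. -/
noncomputable def gromov {V : Type*} (G : SimpleGraph V) (x y z : V) : ℝ :=
  ((G.dist x z : ℝ) + (G.dist z y : ℝ) - (G.dist x y : ℝ)) / 2

/-- A walk is geodesic (an isometric path) if its length equals the
distance between its end-vertices. -/
def IsGeodesicWalk {V : Type*} (G : SimpleGraph V) {u v : V} (w : G.Walk u v) : Prop :=
  w.length = G.dist u v

/-- `G` is `δ`-thin: for all vertices `x, y, z`, all isometric paths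
`pxy = σ(x,y)`, `pxz = σ(x,z)`, `pyz = σ(y,z)` and every vertex `p = pxy.getVert i`
of `σ(x,y)` (at distance `i` from `x`): if `i ≤ (y|z)_x` then `d(p,q) ≤ δ` where `q` is the
vertex of `σ(x,z)` at distance `i` from `x`, and if `i ≥ (y|z)_x` then `d(p,q') ≤ δ` where
`q'` is the vertex of `σ(y,z)` at distance `d(y,p) = d(x,y) − i` from `y`. -/
def IsThin {V : Type*} (G : SimpleGraph V) (δ : ℝ) : Prop :=
  ∀ (x y z : V) (pxy : G.Walk x y) (pxz : G.Walk x z) (pyz : G.Walk y z),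
    IsGeodesicWalk G pxy → IsGeodesicWalk G pxz → IsGeodesicWalk G pyz →
    ∀ i : ℕ, i ≤ pxy.length →
      ((i : ℝ) ≤ gromov G y z x →
        (G.dist (pxy.getVert i) (pxz.getVert i) : ℝ) ≤ δ) ∧
      (gromov G y z x ≤ (i : ℝ) →
        (G.dist (pxy.getVert i) (pyz.getVert (pxy.length - i)) : ℝ) ≤ δ)

/-- An isometric path of `G`, recorded together with its two end-vertices. -/
structure IsomPath {V : Type*} (G : SimpleGraph V) where
  first : V
  last : V
  walk : G.Walk first last
  isom : walk.length = G.dist first last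

/-- A collection `C` of isometric paths is an `R`-cover of `G` if every vertex of `G`
is within distance `R` of the vertex set of some path in `C`. -/
def IsCover {V : Type*} (G : SimpleGraph V) (R : ℕ) (C : List (IsomPath G)) : Prop :=
  ∀ v : V, ∃ P ∈ C, ∃ w ∈ P.walk.support, G.dist v w ≤ R

/-- `P` is a pairing of the even profile `π`: the entries of `π` (with multiplicity)
are partitioned into the pairs listed in `P`. -/
def IsPairing {V : Type*} (π : List V) (P : List (V × V)) : Prop :=
  (π : Multiset V) = (P.map Prod.fst : List V) + (P.map Prod.snd : List V)

/-- `F_π(v) = Σ_{x ∈ π} d(v,x)`. -/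
noncomputable def Fsum {V : Type*} (G : SimpleGraph V) (π : List V) (v : V) : ℕ :=
  (π.map fun x => G.dist v x).sum

/-- `D_π(P) = Σ_{{a,b} ∈ P} d(a,b)`. -/
noncomputable def Dsum {V : Type*} (G : SimpleGraph V) (P : List (V × V)) : ℕ :=
  (P.map fun p => G.dist p.1 p.2).sum

namespace SimpleGraph

variable {V : Type*} {G : SimpleGraph V}

/-- `w` lies on a shortest walk from `a` to `b`; in a tree, on the path from `a` to `b`. -/
def IsBetween (G : SimpleGraph V) (a w b : V) : Prop :=
  G.dist a w + G.dist w b = G.dist a b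

theorem IsBetween.symm {a w b : V} (h : G.IsBetween a w b) : G.IsBetween b w a := by
  unfold IsBetween at h ⊢
  rw [G.dist_comm (u := b) (v := w), G.dist_comm (u := w) (v := a),
    G.dist_comm (u := b) (v := a)]
  omega

theorem Walk.isBetween_of_mem_support {a b w : V} {p : G.Walk a b}
    (hp : p.length = G.dist a b) (hw : w ∈ p.support) : G.IsBetween a w b := by
  classical
  have htake := dist_le (p.takeUntil w hw)
  have hdrop := dist_le (p.dropUntil w hw)
  have hsplit : (p.takeUntil w hw).length + (p.dropUntil w hw).length = p.length := by
    rw [← Walk.length_append, Walk.take_spec]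
  have htri := (p.takeUntil w hw).reachable.dist_triangle_left b
  unfold IsBetween
  omega

theorem IsTree.length_eq_dist_of_isPath (hG : G.IsTree) {a b : V} {p : G.Walk a b}
    (hp : p.IsPath) : p.length = G.dist a b := by
  obtain ⟨q, hq, hlen⟩ := hG.connected.exists_path_of_dist a b
  rw [(hG.existsUnique_path a b).unique hp hq, hlen]

theorem IsTree.mem_support_iff_isBetween (hG : G.IsTree) {a b w : V} {p : G.Walk a b}
    (hp : p.IsPath) : w ∈ p.support ↔ G.IsBetween a w b := by
  refine ⟨Walk.isBetween_of_mem_support (hG.length_eq_dist_of_isPath hp), fun h => ?_⟩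
  obtain ⟨q₁, hq₁⟩ := hG.connected.exists_walk_length_eq_dist a w
  obtain ⟨q₂, hq₂⟩ := hG.connected.exists_walk_length_eq_dist w b
  have hlen : (q₁.append q₂).length = G.dist a b := by
    rw [Walk.length_append, hq₁, hq₂, h]
  rw [(hG.existsUnique_path a b).unique hp ((q₁.append q₂).isPath_of_length_eq_dist hlen),
    Walk.mem_support_append_iff]
  exact Or.inl q₁.end_mem_support

theorem IsTree.isBetween_or (hG : G.IsTree) {a b w : V} (c : V) (h : G.IsBetween a w b) :
    G.IsBetween a w c ∨ G.IsBetween c w b := by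
  classical
  obtain ⟨p, hp, -⟩ := hG.connected.exists_path_of_dist a c
  obtain ⟨q, hq, -⟩ := hG.connected.exists_path_of_dist c b
  have hw : w ∈ (p.append q).bypass.support :=
    (hG.mem_support_iff_isBetween (p.append q).bypass_isPath).2 h
  rcases (Walk.mem_support_append_iff _ _).1 (Walk.support_bypass_subset_support _ hw) with h | h
  · exact Or.inl ((hG.mem_support_iff_isBetween hp).1 h)
  · exact Or.inr ((hG.mem_support_iff_isBetween hq).1 h)

theorem IsTree.dist_add_dist_lt_of_isBetween (hG : G.IsTree) {r x a b w : V}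
    (hrx : G.IsBetween r w x) (hra : ¬G.IsBetween r w a) (hxb : ¬G.IsBetween x w b) :
    G.dist r a + G.dist x b < G.dist r x + G.dist a b := by
  -- `w` is forced onto the path `a`–`b`, and the old distances are shorter than detours via `w`.
  have hax : G.IsBetween a w x := (hG.isBetween_or a hrx).resolve_left hra
  have hab : G.IsBetween a w b :=
    (hG.isBetween_or b hax).resolve_right fun h => hxb h.symm
  have htri₁ : G.dist r a ≤ G.dist r w + G.dist w a := hG.connected.dist_triangle
  have htri₂ : G.dist x b ≤ G.dist x w + G.dist w b := hG.connected.dist_triangle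
  have hwa : G.dist w a = G.dist a w := G.dist_comm
  have hwx : G.dist w x = G.dist x w := G.dist_comm
  unfold IsBetween at *
  omega

end SimpleGraph

section Pairing

variable {α : Type*}

def Multiset.flattenPairs (S : Multiset (α × α)) : Multiset α :=
  S.map Prod.fst + S.map Prod.snd

theorem Multiset.flattenPairs_cons (p : α × α) (S : Multiset (α × α)) :
    (p ::ₘ S).flattenPairs = p.1 ::ₘ p.2 ::ₘ S.flattenPairs := by
  simp only [flattenPairs, map_cons, cons_add, add_cons, cons_swap p.2]

theorem Multiset.exists_eq_cons_of_mem_flattenPairs {x : α} {S : Multiset (α × α)}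
    (hx : x ∈ S.flattenPairs) : ∃ y S', S = (x, y) ::ₘ S' ∨ S = (y, x) ::ₘ S' := by
  classical
  simp only [flattenPairs, mem_add, mem_map] at hx
  obtain ⟨p, hp, rfl⟩ | ⟨p, hp, rfl⟩ := hx
  · exact ⟨p.2, S.erase p, Or.inl (cons_erase hp).symm⟩
  · exact ⟨p.1, S.erase p, Or.inr (cons_erase hp).symm⟩

theorem isPairing_iff_eq_flattenPairs {π : List α} {P : List (α × α)} :
    IsPairing π P ↔ (π : Multiset α) = (P : Multiset (α × α)).flattenPairs := by
  simp [IsPairing, Multiset.flattenPairs]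

theorem exists_isPairing_of_even : ∀ π : List α, Even π.length → ∃ P, IsPairing π P
  | [], _ => ⟨[], by simp [IsPairing]⟩
  | [_], h => by simp at h
  | a :: b :: π, h => by
    obtain ⟨P, hP⟩ := exists_isPairing_of_even π (by simpa [Nat.even_add_one] using h)
    refine ⟨(a, b) :: P, ?_⟩
    rw [isPairing_iff_eq_flattenPairs] at hP ⊢
    simp only [← Multiset.cons_coe, Multiset.flattenPairs_cons, hP]

end Pairing

namespace SimpleGraph

variable {V : Type*} {G : SimpleGraph V}

theorem dsum_eq_sum_map (P : List (V × V)) :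
    Dsum G P = ((P : Multiset (V × V)).map fun p => G.dist p.1 p.2).sum := by
  simp [Dsum]

/-- Routing every pair through `c` bounds the total length of a pairing. -/
theorem Connected.dsum_le_fsum (hG : G.Connected) {π : List V} {P : List (V × V)}
    (hP : IsPairing π P) (c : V) : Dsum G P ≤ Fsum G π c := by
  have hπ : Fsum G π c = ((π : Multiset V).map (G.dist c)).sum := by simp [Fsum]
  rw [hπ, isPairing_iff_eq_flattenPairs.1 hP, dsum_eq_sum_map]
  simp only [Multiset.flattenPairs, Multiset.map_add, Multiset.sum_add, Multiset.map_map,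
    ← Multiset.sum_map_add]
  refine Multiset.sum_map_le_sum_map _ _ fun p _ => ?_
  simpa [G.dist_comm (u := c) (v := p.1)] using hG.dist_triangle (v := c)

theorem Connected.exists_isPairing_forall_dsum_le (hG : G.Connected) {π : List V}
    (hπ : Even π.length) :
    ∃ P, IsPairing π P ∧ ∀ P', IsPairing π P' → Dsum G P' ≤ Dsum G P := by
  obtain ⟨c⟩ := hG.nonempty
  set D := {n | ∃ P, IsPairing π P ∧ Dsum G P = n}
  have hne : D.Nonempty := by
    obtain ⟨P, hP⟩ := exists_isPairing_of_even π hπ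
    exact ⟨_, P, hP, rfl⟩
  have hbdd : BddAbove D := ⟨Fsum G π c, by rintro _ ⟨P, hP, rfl⟩; exact hG.dsum_le_fsum hP c⟩
  obtain ⟨P, hP, hmax⟩ := Nat.sSup_mem hne hbdd
  exact ⟨P, hP, fun P' hP' => hmax ▸ le_csSup hbdd ⟨P', hP', rfl⟩⟩

theorem IsTree.exists_isPairing_dsum_lt (hG : G.IsTree) {r x w : V} {l : List V}
    {P : List (V × V)} (hP : IsPairing (r :: l) P) (hx : x ∈ l) (hw : G.IsBetween r w x)
    (hPw : ∀ p ∈ P, ¬G.IsBetween p.1 w p.2) :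
    ∃ P', IsPairing (r :: l) P' ∧ Dsum G P < Dsum G P' := by
  rw [isPairing_iff_eq_flattenPairs] at hP
  have hPw' : ∀ {a b}, (a, b) ∈ (P : Multiset (V × V)) ∨ (b, a) ∈ (P : Multiset (V × V)) →
      ¬G.IsBetween a w b := by
    rintro a b (h | h) hab
    · exact hPw _ (Multiset.mem_coe.1 h) hab
    · exact hPw _ (Multiset.mem_coe.1 h) hab.symm
  have hr : r ∈ (P : Multiset (V × V)).flattenPairs := by simp [← hP]
  obtain ⟨a, S₁, hS₁⟩ := Multiset.exists_eq_cons_of_mem_flattenPairs hr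
  have hra : ¬G.IsBetween r w a := hPw' (by rcases hS₁ with h | h <;> simp [h])
  have hl : (l : Multiset V) = a ::ₘ S₁.flattenPairs := by
    rw [← Multiset.cons_inj_right r, Multiset.cons_coe, hP]
    rcases hS₁ with h | h <;>
      simp only [h, Multiset.flattenPairs_cons, Multiset.cons_swap a r]
  have hxS₁ : x ∈ S₁.flattenPairs := by
    rcases Multiset.mem_cons.1 (hl ▸ Multiset.mem_coe.2 hx) with rfl | h
    · exact absurd hw hra
    · exact h
  obtain ⟨b, S₂, hS₂⟩ := Multiset.exists_eq_cons_of_mem_flattenPairs hxS₁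
  have hxb : ¬G.IsBetween x w b :=
    hPw' (by rcases hS₁ with h | h <;> rcases hS₂ with h' | h' <;> simp [h, h'])
  have hdsum : Dsum G P = G.dist r a + G.dist x b + Dsum G S₂.toList := by
    rw [dsum_eq_sum_map, dsum_eq_sum_map, Multiset.coe_toList]
    rcases hS₁ with h | h <;> rcases hS₂ with h' | h' <;>
      simp [h, h', G.dist_comm (u := a), G.dist_comm (u := b)] <;> omega
  refine ⟨(r, x) :: (a, b) :: S₂.toList, ?_, ?_⟩
  · rw [isPairing_iff_eq_flattenPairs, ← Multiset.cons_coe, hl]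
    rcases hS₂ with rfl | rfl <;>
      (simp only [← Multiset.cons_coe, Multiset.coe_toList, Multiset.flattenPairs_cons]
       simp only [← Multiset.singleton_add]
       abel)
  · have hlt := hG.dist_add_dist_lt_of_isBetween hw hra hxb
    simp only [Dsum, List.map_cons, List.sum_cons] at hdsum ⊢
    omega

end SimpleGraph

/-- Let `T` be a tree, `r` a vertex, and `C` (given as a list `L` of isometric paths
rooted at `r`, paired with their other end-vertices) an `(r,R)`-cover of `T` with
`|C| = 2k−1`. Let `π = r :: (other end-vertices)` be the profile of length `2k` of all
end-vertices of paths in `C`. Then there is a pairing `P` of `π` such that the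
collection `{ τ(x,y) : {x,y} ∈ P }` of the `k` (unique) paths of `T` between the pairs
is an `R`-cover of `T`. -/
theorem stmt_15 {V : Type*} (T : SimpleGraph V) (hT : T.IsTree)
    (r : V) (R k : ℕ) (hk : 1 ≤ k)
    (L : List ((x : V) × T.Walk r x))
    (hgeo : ∀ Q ∈ L, IsGeodesicWalk T Q.2)
    (hlen : L.length = 2 * k - 1)
    (hcov : ∀ v : V, ∃ Q ∈ L, ∃ w ∈ Q.2.support, T.dist v w ≤ R)
    (τ : ∀ x y : V, T.Walk x y) (hτ : ∀ x y : V, (τ x y).IsPath) :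
    ∃ P : List (V × V), IsPairing (r :: L.map Sigma.fst) P ∧
      ∀ u : V, ∃ p ∈ P, ∃ z ∈ (τ p.1 p.2).support, T.dist u z ≤ R := by
  have hτ' : ∀ {a b w : V}, w ∈ (τ a b).support ↔ T.IsBetween a w b :=
    hT.mem_support_iff_isBetween (hτ _ _)
  have heven : Even (r :: L.map Sigma.fst).length := ⟨k, by simp [hlen]; omega⟩
  obtain ⟨P, hP, hmax⟩ := hT.connected.exists_isPairing_forall_dsum_le heven
  refine ⟨P, hP, fun u => ?_⟩
  obtain ⟨Q, hQ, w, hwQ, hdw⟩ := hcov u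
  by_contra! hfar
  have hPw : ∀ p ∈ P, ¬T.IsBetween p.1 w p.2 := fun p hp hw =>
    (hfar p hp w (hτ'.2 hw)).not_ge hdw
  obtain ⟨P', hP', hlt⟩ := hT.exists_isPairing_dsum_lt hP (List.mem_map_of_mem hQ)
    (Walk.isBetween_of_mem_support (hgeo Q hQ) hwQ) hPw
  exact (hmax P' hP').not_gt hlt
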